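/- g(3) = 3: there exists a correct adaptive strategy of depth 3 in the heavier-fakes model on 3 coins, but there is no correct adaptive strategy of depth 2 on 3 coins (the exceptional case of Proposition 1). -/

import Mathlib

/-!
Adaptive weighing model with heavier fakes and reference coins.
Coins are the elements of `Fin n`; the unknown fake set is an arbitrary
`F : Finset (Fin n)`.  A weighing is a pair `(L, R)` of disjoint subsets of
`Fin n` (pans may be padded with known-genuine reference coins, so `L` and `R`
need not have the same size), and its outcome is the three-valued comparison
of `|L ∩ F|` and `|R ∩ F|`.
-/

/-- Outcome of weighing pans `L` and `R` when the fake set is `F`. -/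
def weighOutcome {n : ℕ} (L R F : Finset (Fin n)) : Ordering :=
  compare (L ∩ F).card (R ∩ F).card

/-- The outcome sequence produced by fake set `F` after `k` weighings of the
adaptive strategy `weigh` (which assigns a weighing to each outcome history). -/
def runList {n : ℕ} (weigh : List Ordering → Finset (Fin n) × Finset (Fin n))
    (F : Finset (Fin n)) : ℕ → List Ordering
  | 0 => []
  | k + 1 =>
    let σ := runList weigh F k
    σ ++ [weighOutcome (weigh σ).1 (weigh σ).2 F]

/-- `(weigh, answer)` is a correct adaptive strategy of depth `k` on `n` coins
in the heavier-fakes model: every prescribed weighing has disjoint pans, and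
for every fake set `F` the answer at the outcome sequence produced by `F`
equals `F`. -/
def IsCorrectStrategy (n k : ℕ)
    (weigh : List Ordering → Finset (Fin n) × Finset (Fin n))
    (answer : List Ordering → Finset (Fin n)) : Prop :=
  (∀ σ : List Ordering, σ.length < k → Disjoint (weigh σ).1 (weigh σ).2) ∧
  (∀ F : Finset (Fin n), answer (runList weigh F k) = F)

/-- There is a correct adaptive strategy of depth `k` on `n` coins. -/
def HasStrategy (n k : ℕ) : Prop :=
  ∃ weigh answer, IsCorrectStrategy n k weigh answer

/-- `g n` is the least number of weighings sufficient to find all the fakes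
among `n` coins in the heavier-fakes model. -/
noncomputable def g (n : ℕ) : ℕ := sInf {k | HasStrategy n k}

/-!
Weighing coin `i` alone at step `i` reveals whether it is fake, so `n` weighings always suffice.
Conversely, a correct strategy of depth `k` makes `F ↦ (outcome sequence of F)` injective, so the
fake sets sharing the first `j` outcomes number at most `3 ^ (k - j)`. For three coins this gives
`2 ^ 3 ≤ 3 ^ k`, hence `k ≥ 2`; and `k = 2` is impossible too, because every single weighing of
three coins has an outcome shared by at least four of the eight fake sets.
-/

section runList

variable {n : ℕ} (weigh : List Ordering → Finset (Fin n) × Finset (Fin n)) (F : Finset (Fin n))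

@[simp]
theorem runList_length (k : ℕ) : (runList weigh F k).length = k := by
  induction k with
  | zero => rfl
  | succ k ih => simp [runList, ih]

theorem runList_take {j k : ℕ} (hjk : j ≤ k) : (runList weigh F k).take j = runList weigh F j := by
  induction k with
  | zero => rw [Nat.le_zero.mp hjk]; rfl
  | succ k ih =>
    rcases hjk.eq_or_lt with rfl | hlt
    · exact List.take_of_length_le (runList_length weigh F _).le
    · rw [runList, List.take_append_of_le_length (by simpa using Nat.lt_succ_iff.mp hlt)]
      exact ih (Nat.lt_succ_iff.mp hlt)

end runList

theorem card_filter_runList_eq_le {n k j : ℕ} {weigh : List Ordering → Finset (Fin n) × Finset (Fin n)}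
    {answer : List Ordering → Finset (Fin n)} (h : IsCorrectStrategy n k weigh answer)
    (hjk : j ≤ k) (σ : List Ordering) :
    (Finset.univ.filter fun F => runList weigh F j = σ).card ≤ 3 ^ (k - j) := by
  let suffix (F : Finset (Fin n)) : List.Vector Ordering (k - j) :=
    ⟨(runList weigh F k).drop j, by simp⟩
  have hinj : Set.InjOn suffix (Finset.univ.filter fun F => runList weigh F j = σ) := by
    intro F₁ hF₁ F₂ hF₂ hsuffix
    simp only [Finset.coe_filter, Finset.mem_univ, true_and, Set.mem_ofPred_eq] at hF₁ hF₂
    have hrun : runList weigh F₁ k = runList weigh F₂ k := by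
      rw [← List.take_append_drop j (runList weigh F₁ k), ← List.take_append_drop j (runList weigh F₂ k),
        runList_take _ _ hjk, runList_take _ _ hjk, hF₁, hF₂]
      exact congrArg (σ ++ ·.toList) hsuffix
    rw [← h.2 F₁, ← h.2 F₂, hrun]
  calc _ ≤ (Finset.univ : Finset (List.Vector Ordering (k - j))).card :=
        Finset.card_le_card_of_injOn suffix (fun _ _ => Finset.mem_univ _) hinj
    _ = 3 ^ (k - j) := by rw [Finset.card_univ, card_vector]; rfl

theorem HasStrategy.two_pow_le_three_pow {n k : ℕ} (h : HasStrategy n k) : 2 ^ n ≤ 3 ^ k := by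
  obtain ⟨weigh, answer, h⟩ := h
  simpa [runList] using card_filter_runList_eq_le h k.zero_le []

theorem HasStrategy.exists_forall_card_filter_weighOutcome_le {n m : ℕ} (h : HasStrategy n (m + 1)) :
    ∃ L R : Finset (Fin n), ∀ o : Ordering,
      (Finset.univ.filter fun F => weighOutcome L R F = o).card ≤ 3 ^ m := by
  obtain ⟨weigh, answer, h⟩ := h
  refine ⟨(weigh []).1, (weigh []).2, fun o => ?_⟩
  simpa [runList] using card_filter_runList_eq_le h (Nat.le_add_left 1 m) [o]

def weighOneByOne (n : ℕ) (σ : List Ordering) : Finset (Fin n) × Finset (Fin n) :=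
  if h : σ.length < n then ({⟨σ.length, h⟩}, ∅) else (∅, ∅)

def fakesOfOutcomes (n : ℕ) (σ : List Ordering) : Finset (Fin n) :=
  Finset.univ.filter fun i => σ.getD i .eq = .gt

theorem runList_weighOneByOne {n k : ℕ} (hk : k ≤ n) (F : Finset (Fin n)) :
    runList (weighOneByOne n) F k =
      List.ofFn fun i : Fin k => if Fin.castLE hk i ∈ F then .gt else .eq := by
  induction k with
  | zero => rfl
  | succ k ih =>
    rw [runList, ih (Nat.le_of_succ_le hk), List.ofFn_succ_last]
    simp only [weighOneByOne, List.length_ofFn, dif_pos (Nat.lt_of_succ_le hk), weighOutcome]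
    congr 2
    change _ = if (⟨k, hk⟩ : Fin n) ∈ F then _ else _
    split_ifs with hkF
    · simp [Finset.singleton_inter_of_mem hkF]; rfl
    · simp [Finset.singleton_inter_of_notMem hkF]

theorem hasStrategy_self (n : ℕ) : HasStrategy n n := by
  refine ⟨weighOneByOne n, fakesOfOutcomes n, fun σ hσ => ?_, fun F => ?_⟩
  · simp [weighOneByOne, hσ]
  · ext i
    simp [fakesOfOutcomes, runList_weighOneByOne le_rfl, List.getD_eq_getElem?_getD]

theorem exists_four_le_card_filter_weighOutcome (L R : Finset (Fin 3)) :
    ∃ o : Ordering, 4 ≤ (Finset.univ.filter fun F => weighOutcome L R F = o).card := by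
  revert L R
  decide

theorem not_hasStrategy_three_of_lt_three {k : ℕ} (hk : k < 3) : ¬HasStrategy 3 k := by
  intro h
  obtain hk | rfl : k ≤ 1 ∨ k = 2 := by omega
  · have := h.two_pow_le_three_pow.trans (Nat.pow_le_pow_right (by norm_num) hk)
    norm_num at this
  · obtain ⟨L, R, hle⟩ := h.exists_forall_card_filter_weighOutcome_le
    obtain ⟨o, hge⟩ := exists_four_le_card_filter_weighOutcome L R
    have := hge.trans (hle o)
    norm_num at this

/-- **The exceptional case of Proposition 1: `g 3 = 3`.** There is a correct
adaptive strategy of depth `3` on `3` coins, but none of depth `2`. -/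
theorem g_three_eq_three :
    HasStrategy 3 3 ∧ ¬ HasStrategy 3 2 ∧ g 3 = 3 := by
  have h3 : HasStrategy 3 3 := hasStrategy_self 3
  refine ⟨h3, not_hasStrategy_three_of_lt_three (by norm_num), ?_⟩
  refine le_antisymm (Nat.sInf_le h3) (le_csInf ⟨3, h3⟩ fun k hk => ?_)
  by_contra hlt
  exact not_hasStrategy_three_of_lt_three (not_le.mp hlt) hk
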